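/- Let $\mathsf{M}$ be a $d\times d$ integer dilation matrix with $d_{\mathsf{M}}=|\det\mathsf{M}|$, $\Gamma_{\mathsf{M}}=\{\gamma_1,\dots,\gamma_{d_{\mathsf{M}}}\}$ with $\gamma_1=0$, and let $a,\tilde a$ be finitely supported $\mathsf{M}$-interpolatory filters. Suppose for each $j=2,\dots,d_{\mathsf{M}}$ there are finitely supported filters $u_{j,t},\tilde u_{j,t}$ ($t=1,\dots,s_j$) with $d_{\mathsf{M}}^{-1} - d_{\mathsf{M}}\,\overline{\widehat{a^{[\gamma_j,\mathsf{M}]}}(\xi)}\,\widehat{\tilde a^{[\gamma_j,\mathsf{M}]}}(\xi) = \sum_{t=1}^{s_j} \overline{\widehat{u_{j,t}}(\xi)}\,\widehat{\tilde u_{j,t}}(\xi)$ for all $\xi$. Define $\widehat{b_1}:=\widehat{a}-1$, $\widehat{\tilde b_1}:=1-\widehat{\tilde a}$, $\widehat{b_j}(\xi):=d_{\mathsf{M}}^{-1/2}-d_{\mathsf{M}}^{1/2}e^{-i\gamma_j\cdot\xi}\widehat{a^{[\gamma_j,\mathsf{M}]}}(\mathsf{M}^{\mathsf{T}}\xi)$,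 $\widehat{\tilde b_j}(\xi):=d_{\mathsf{M}}^{-1/2}-d_{\mathsf{M}}^{1/2}e^{-i\gamma_j\cdot\xi}\widehat{\tilde a^{[\gamma_j,\mathsf{M}]}}(\mathsf{M}^{\mathsf{T}}\xi)$ for $j=2,\dots,d_{\mathsf{M}}$, and $\widehat{b_{j,t}}(\xi):=e^{-i\gamma_j\cdot\xi}\widehat{u_{j,t}}(\mathsf{M}^{\mathsf{T}}\xi)$, $\widehat{\tilde b_{j,t}}(\xi):=e^{-i\gamma_j\cdot\xi}\widehat{\tilde u_{j,t}}(\mathsf{M}^{\mathsf{T}}\xi)$. Then the collection $(\{a; b_1,\dots,b_{d_{\mathsf{M}}}, (b_{j,t})\},\{\tilde a; \tilde b_1,\dots,\tilde b_{d_{\mathsf{M}}},(\tilde b_{j,t})\})$ is a dual $\mathsf{M}$-framelet filter bank, i.e., $\overline{\widehat{a}(\xi)}\widehat{\tilde a}(\xi+2\pi\omega) + \sum \overline{\widehat{b}(\xi)}\widehat{\tilde b}(\xi+2\pi\omega) = \delta(\omega)$ for all $\xi\in\mathbb{R}^d$ and $\omega\in\Omega_{\mathsf{M}}$, where the sum runs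 over all constructed high-pass pairs. -/

import Mathlib

/-!
Write `â(ξ) = ∑ⱼ e^{-iγⱼ·ξ} â^{[γⱼ,M]}(Mᵀξ)` (polyphase decomposition). If `Mᵀω ∈ ℤᵈ`, the
shift `ξ ↦ ξ + 2πω` leaves every `â^{[γ,M]}(Mᵀξ)` unchanged and multiplies the `j`-th
component by the character value `χ_ω(γⱼ) = e^{-2πiγⱼ·ω}`. For each `j ≠ 1`, the factorization
hypothesis collapses the contribution of `b_j` together with the `b_{j,t}` to
`d_M⁻¹(1 + χ_ω(γⱼ))` minus the conjugated `j`-th component of `â(ξ)` and the `j`-th component of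
`ã(ξ + 2πω)`. Interpolation makes this expression vanish at `j = 1`, so summing over all `j`
reassembles `â` and `ã`, which cancel against the terms from `a` and `b_1`. What remains is
`d_M⁻¹ ∑ⱼ χ_ω(γⱼ)`, which is `δ(ω)` because `χ_ω` is a character of `ℤᵈ/Mℤᵈ`.
-/

open scoped BigOperators Classical
open Asymptotics Filter Matrix

noncomputable section

/-- Real cast of an integer vector. -/
def zr {d : ℕ} (k : Fin d → ℤ) : Fin d → ℝ := fun i => (k i : ℝ)

/-- Fourier series `û(ξ) = ∑_k u(k) e^{-i k·ξ}` of a filter on `ℤ^d`. -/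
def fhat {d : ℕ} (a : (Fin d → ℤ) → ℂ) (ξ : Fin d → ℝ) : ℂ :=
  ∑' k : Fin d → ℤ, a k * Complex.exp (-Complex.I * ((∑ i, (k i : ℝ) * ξ i : ℝ) : ℂ))

/-- `d_M = |det M|`. -/
def dm {d : ℕ} (M : Matrix (Fin d) (Fin d) ℤ) : ℕ := M.det.natAbs

/-- A dilation matrix: integer matrix whose (complex) eigenvalues all exceed 1 in modulus. -/
def IsDilation {d : ℕ} (M : Matrix (Fin d) (Fin d) ℤ) : Prop :=
  M.det ≠ 0 ∧ ∀ z : ℂ, (M.map (Int.cast : ℤ → ℂ)).charpoly.IsRoot z → 1 < ‖z‖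

/-- The real matrix associated with an integer matrix. -/
def Mr {d : ℕ} (M : Matrix (Fin d) (Fin d) ℤ) : Matrix (Fin d) (Fin d) ℝ :=
  M.map (Int.cast : ℤ → ℝ)

/-- `M`-interpolatory filter: `a(Mk) = d_M⁻¹ δ(k)`. -/
def Interp {d : ℕ} (M : Matrix (Fin d) (Fin d) ℤ) (a : (Fin d → ℤ) → ℂ) : Prop :=
  ∀ k : Fin d → ℤ, a (M.mulVec k) = ((dm M : ℂ))⁻¹ * (if k = 0 then 1 else 0)

/-- Coset filter `u^{[γ,M]}(k) = u(γ + Mk)`. -/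
def coset {d : ℕ} (M : Matrix (Fin d) (Fin d) ℤ) (γ : Fin d → ℤ)
    (a : (Fin d → ℤ) → ℂ) : (Fin d → ℤ) → ℂ := fun k => a (γ + M.mulVec k)

/-- Fourier series of the high-pass filter
`b̂_j(ξ) = d_M^{-1/2} - d_M^{1/2} e^{-iγ_j·ξ} â^{[γ_j,M]}(Mᵀξ)`. -/
def hpB {d N : ℕ} (M : Matrix (Fin d) (Fin d) ℤ) (γ : Fin N → (Fin d → ℤ))
    (a : (Fin d → ℤ) → ℂ) (j : Fin N) (ξ : Fin d → ℝ) : ℂ :=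
  ((Real.sqrt (dm M) : ℝ) : ℂ)⁻¹ - ((Real.sqrt (dm M) : ℝ) : ℂ) *
    (Complex.exp (-Complex.I * ((∑ i, (γ j i : ℝ) * ξ i : ℝ) : ℂ)) *
      fhat (coset M (γ j) a) ((Mr M)ᵀ.mulVec ξ))

/-- Fourier series of the high-pass filter `b̂_{j,t}(ξ) = e^{-iγ_j·ξ} û_{j,t}(Mᵀξ)`. -/
def hpU {d N : ℕ} (M : Matrix (Fin d) (Fin d) ℤ) (γ : Fin N → (Fin d → ℤ))
    (u : (Fin d → ℤ) → ℂ) (j : Fin N) (ξ : Fin d → ℝ) : ℂ :=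
  Complex.exp (-Complex.I * ((∑ i, (γ j i : ℝ) * ξ i : ℝ) : ℂ)) *
    fhat u ((Mr M)ᵀ.mulVec ξ)

open ComplexConjugate Real

def expNegI (x : ℝ) : ℂ := Complex.exp (-Complex.I * x)

lemma expNegI_zero : expNegI 0 = 1 := by simp [expNegI]

lemma expNegI_add (x y : ℝ) : expNegI (x + y) = expNegI x * expNegI y := by
  simp only [expNegI, ← Complex.exp_add]
  push_cast
  ring_nf

lemma conj_expNegI_mul_self (x : ℝ) : conj (expNegI x) * expNegI x = 1 := by
  rw [expNegI, ← Complex.exp_conj, ← Complex.exp_add]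
  simp

lemma expNegI_two_pi_mul_eq_one_iff (x : ℝ) : expNegI (2 * π * x) = 1 ↔ ∃ n : ℤ, x = n := by
  rw [expNegI, Complex.exp_eq_one_iff]
  constructor
  · rintro ⟨n, h⟩
    refine ⟨-n, ?_⟩
    have him : -(2 * π * x) = n * (2 * π) := by simpa using congrArg Complex.im h
    push_cast
    exact mul_left_cancel₀ Real.two_pi_pos.ne' (by linear_combination -him)
  · rintro ⟨n, rfl⟩
    exact ⟨-n, by push_cast; ring⟩

variable {d N : ℕ}

@[simp] lemma zr_zero : zr (0 : Fin d → ℤ) = 0 := by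
  ext; simp [zr]

@[simp] lemma zr_add (k k' : Fin d → ℤ) : zr (k + k') = zr k + zr k' := by
  ext; simp [zr]

@[simp] lemma zr_neg (k : Fin d → ℤ) : zr (-k) = -zr k := by
  ext; simp [zr]

lemma zr_dotProduct_zr (k m : Fin d → ℤ) : zr k ⬝ᵥ zr m = ((k ⬝ᵥ m : ℤ) : ℝ) := by
  simp [zr, dotProduct]

lemma zr_mulVec_dotProduct (M : Matrix (Fin d) (Fin d) ℤ) (n : Fin d → ℤ) (ξ : Fin d → ℝ) :
    zr (M *ᵥ n) ⬝ᵥ ξ = zr n ⬝ᵥ ((Mr M)ᵀ *ᵥ ξ) := by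
  have : zr (M *ᵥ n) = Mr M *ᵥ zr n := funext (RingHom.map_mulVec (Int.castRingHom ℝ) M n)
  rw [this, dotProduct_comm, dotProduct_mulVec, ← mulVec_transpose, dotProduct_comm]

def freqChar (ω : Fin d → ℝ) : AddChar (Fin d → ℤ) ℂ where
  toFun k := expNegI (2 * π * (zr k ⬝ᵥ ω))
  map_zero_eq_one' := by simp [expNegI]
  map_add_eq_mul' k k' := by rw [zr_add, add_dotProduct, mul_add, expNegI_add]

lemma freqChar_apply (ω : Fin d → ℝ) (k : Fin d → ℤ) :
    freqChar ω k = expNegI (2 * π * (zr k ⬝ᵥ ω)) := rfl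

lemma freqChar_zr_apply (m k : Fin d → ℤ) : freqChar (zr m) k = 1 := by
  rw [freqChar_apply, expNegI_two_pi_mul_eq_one_iff, zr_dotProduct_zr]
  exact ⟨_, rfl⟩

lemma freqChar_apply_mulVec {M : Matrix (Fin d) (Fin d) ℤ} {ω : Fin d → ℝ} {m : Fin d → ℤ}
    (hω : (Mr M)ᵀ *ᵥ ω = zr m) (n : Fin d → ℤ) : freqChar ω (M *ᵥ n) = 1 := by
  rw [freqChar_apply, zr_mulVec_dotProduct, hω, ← freqChar_apply, freqChar_zr_apply]

lemma expNegI_dotProduct_add_two_pi_smul (k : Fin d → ℤ) (ξ ω : Fin d → ℝ) :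
    expNegI (zr k ⬝ᵥ (ξ + (2 * π) • ω)) = expNegI (zr k ⬝ᵥ ξ) * freqChar ω k := by
  rw [dotProduct_add, dotProduct_smul, smul_eq_mul, expNegI_add, freqChar_apply]

lemma fhat_eq_tsum (a : (Fin d → ℤ) → ℂ) (ξ : Fin d → ℝ) :
    fhat a ξ = ∑' k, a k * expNegI (zr k ⬝ᵥ ξ) := rfl

lemma fhat_add_two_pi_smul_zr (a : (Fin d → ℤ) → ℂ) (ξ : Fin d → ℝ) (m : Fin d → ℤ) :
    fhat a (ξ + (2 * π) • zr m) = fhat a ξ := by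
  simp only [fhat_eq_tsum, expNegI_dotProduct_add_two_pi_smul, freqChar_zr_apply, mul_one]

lemma fhat_mulVec_add_two_pi_smul {M : Matrix (Fin d) (Fin d) ℤ} {ω : Fin d → ℝ}
    {m : Fin d → ℤ} (hω : (Mr M)ᵀ *ᵥ ω = zr m) (a : (Fin d → ℤ) → ℂ) (ξ : Fin d → ℝ) :
    fhat a ((Mr M)ᵀ *ᵥ (ξ + (2 * π) • ω)) = fhat a ((Mr M)ᵀ *ᵥ ξ) := by
  rw [mulVec_add, mulVec_smul, hω, fhat_add_two_pi_smul_zr]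

def IsCosetReps (M : Matrix (Fin d) (Fin d) ℤ) (γ : Fin N → Fin d → ℤ) : Prop :=
  ∀ k : Fin d → ℤ, ∃! j : Fin N, ∃ n : Fin d → ℤ, k = γ j + M *ᵥ n

namespace IsCosetReps

variable {M : Matrix (Fin d) (Fin d) ℤ} {γ : Fin N → Fin d → ℤ}

lemma eq_of_add_mulVec (hγ : IsCosetReps M γ) {j j' : Fin N} {n : Fin d → ℤ}
    (h : γ j = γ j' + M *ᵥ n) : j = j' :=
  (hγ (γ j)).unique ⟨0, by simp⟩ ⟨n, h⟩

lemma exists_perm (hγ : IsCosetReps M γ) (k₀ : Fin d → ℤ) :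
    ∃ σ : Equiv.Perm (Fin N), ∀ j, ∃ n, γ j + k₀ = γ (σ j) + M *ᵥ n := by
  choose σ hσ _ using fun j => hγ (γ j + k₀)
  choose n hn using hσ
  have hinj : Function.Injective σ := fun j j' h => hγ.eq_of_add_mulVec (n := n j - n j') <| by
    have hj' := hn j'
    rw [← h] at hj'
    rw [mulVec_sub]
    linear_combination hn j - hj'
  exact ⟨Equiv.ofBijective σ hinj.bijective_of_finite, fun j => ⟨n j, hn j⟩⟩

lemma sum_addChar_eq_zero (hγ : IsCosetReps M γ) (χ : AddChar (Fin d → ℤ) ℂ)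
    (hχ : ∀ n, χ (M *ᵥ n) = 1) {k₀ : Fin d → ℤ} (hk₀ : χ k₀ ≠ 1) : ∑ j, χ (γ j) = 0 := by
  obtain ⟨σ, hσ⟩ := hγ.exists_perm k₀
  have hshift : χ k₀ * ∑ j, χ (γ j) = ∑ j, χ (γ j) := calc
    χ k₀ * ∑ j, χ (γ j) = ∑ j, χ (γ (σ j)) := by
      rw [Finset.mul_sum]
      refine Finset.sum_congr rfl fun j _ => ?_
      obtain ⟨n, hn⟩ := hσ j
      rw [mul_comm, ← AddChar.map_add_eq_mul, hn, AddChar.map_add_eq_mul, hχ, mul_one]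
    _ = ∑ j, χ (γ j) := Equiv.sum_comp σ fun j => χ (γ j)
  have : (χ k₀ - 1) * ∑ j, χ (γ j) = 0 := by linear_combination hshift
  exact (mul_eq_zero.mp this).resolve_left (sub_ne_zero.mpr hk₀)

lemma sum_freqChar_eq_zero (hγ : IsCosetReps M γ) {ω : Fin d → ℝ} {m : Fin d → ℤ}
    (hω : (Mr M)ᵀ *ᵥ ω = zr m) (hωZ : ∀ n, ω ≠ zr n) : ∑ j, freqChar ω (γ j) = 0 := by
  obtain ⟨i₀, hi₀⟩ : ∃ i₀, ∀ z : ℤ, ω i₀ ≠ z := by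
    by_contra! h
    choose n hn using h
    exact hωZ n (funext hn)
  refine hγ.sum_addChar_eq_zero _ (freqChar_apply_mulVec hω) (k₀ := Pi.single i₀ 1) ?_
  rw [freqChar_apply, Ne, expNegI_two_pi_mul_eq_one_iff]
  rintro ⟨z, hz⟩
  refine hi₀ z ?_
  simpa [zr, dotProduct, Pi.single_apply] using hz

lemma inv_dm_mul_sum_freqChar (hγ : IsCosetReps M γ) (hN : N = dm M) (hdet : M.det ≠ 0)
    {ω : Fin d → ℝ} {m : Fin d → ℤ} (hω : (Mr M)ᵀ *ᵥ ω = zr m) (hωZ : ω = 0 ∨ ∀ n, ω ≠ zr n) :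
    (dm M : ℂ)⁻¹ * ∑ j, freqChar ω (γ j) = if ω = 0 then 1 else 0 := by
  rcases hωZ with rfl | hωZ
  · have hdm : (dm M : ℂ) ≠ 0 := by simpa [dm] using hdet
    simp [← zr_zero, freqChar_zr_apply, hN, hdm]
  · rw [hγ.sum_freqChar_eq_zero hω hωZ, mul_zero, if_neg]
    simpa using hωZ 0

lemma bijective (hγ : IsCosetReps M γ) (hdet : M.det ≠ 0) :
    Function.Bijective fun p : Fin N × (Fin d → ℤ) => γ p.1 + M *ᵥ p.2 := by
  refine ⟨fun ⟨j, n⟩ ⟨j', n'⟩ h => ?_, fun k => ?_⟩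
  · have hj : j = j' := hγ.eq_of_add_mulVec (n := n' - n) <| by
      rw [mulVec_sub]
      linear_combination h
    subst hj
    have hker : M *ᵥ (n - n') = 0 := by
      rw [mulVec_sub]
      linear_combination h
    by_contra hne
    refine hdet (exists_mulVec_eq_zero_iff.mp ⟨n - n', sub_ne_zero.mpr fun h' => hne ?_, hker⟩)
    rw [h']
  · obtain ⟨j, ⟨n, hn⟩, -⟩ := hγ k
    exact ⟨(j, n), hn.symm⟩

end IsCosetReps

section HighPass

variable {M : Matrix (Fin d) (Fin d) ℤ} {γ : Fin N → Fin d → ℤ}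

lemma hpU_eq (u : (Fin d → ℤ) → ℂ) (j : Fin N) (ξ : Fin d → ℝ) :
    hpU M γ u j ξ = expNegI (zr (γ j) ⬝ᵥ ξ) * fhat u ((Mr M)ᵀ *ᵥ ξ) := rfl

lemma hpU_add_two_pi_smul {ω : Fin d → ℝ} {m : Fin d → ℤ} (hω : (Mr M)ᵀ *ᵥ ω = zr m)
    (u : (Fin d → ℤ) → ℂ) (j : Fin N) (ξ : Fin d → ℝ) :
    hpU M γ u j (ξ + (2 * π) • ω) = freqChar ω (γ j) * hpU M γ u j ξ := by
  rw [hpU_eq, hpU_eq, expNegI_dotProduct_add_two_pi_smul, fhat_mulVec_add_two_pi_smul hω]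
  ring

lemma conj_hpU_mul_hpU (u v : (Fin d → ℤ) → ℂ) (j : Fin N) (ξ : Fin d → ℝ) :
    conj (hpU M γ u j ξ) * hpU M γ v j ξ
      = conj (fhat u ((Mr M)ᵀ *ᵥ ξ)) * fhat v ((Mr M)ᵀ *ᵥ ξ) := by
  rw [hpU_eq, hpU_eq, map_mul]
  linear_combination (conj (fhat u ((Mr M)ᵀ *ᵥ ξ)) * fhat v ((Mr M)ᵀ *ᵥ ξ)) *
    conj_expNegI_mul_self (zr (γ j) ⬝ᵥ ξ)

end HighPass

/-- `hpU` applied to the coset filter `a^{[γⱼ,M]}` is exactly the `j`-th polyphase component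
`e^{-iγⱼ·ξ} â^{[γⱼ,M]}(Mᵀξ)` of `â(ξ)`. -/
def polyphaseTerm (M : Matrix (Fin d) (Fin d) ℤ) (γ : Fin N → Fin d → ℤ)
    (a : (Fin d → ℤ) → ℂ) (j : Fin N) (ξ : Fin d → ℝ) : ℂ :=
  hpU M γ (coset M (γ j) a) j ξ

section Polyphase

variable {M : Matrix (Fin d) (Fin d) ℤ} {γ : Fin N → Fin d → ℤ}

lemma IsCosetReps.fhat_eq_sum_polyphaseTerm (hγ : IsCosetReps M γ) (hdet : M.det ≠ 0)
    {a : (Fin d → ℤ) → ℂ} (ha : (Function.support a).Finite) (ξ : Fin d → ℝ) :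
    fhat a ξ = ∑ j, polyphaseTerm M γ a j ξ := by
  set f : (Fin d → ℤ) → ℂ := fun k => a k * expNegI (zr k ⬝ᵥ ξ)
  have hf : Summable f := summable_of_hasFiniteSupport <| ha.subset <|
    Function.support_mul_subset_left _ _
  let e := Equiv.ofBijective _ (hγ.bijective hdet)
  have hfe : Summable (f ∘ e) := e.summable_iff.mpr hf
  have hfiber (j : Fin N) : Summable fun n => (f ∘ e) (j, n) :=
    hf.comp_injective (e.injective.comp (Prod.mk_right_injective j))
  calc fhat a ξ = ∑' p, f (e p) := (e.tsum_eq f).symm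
    _ = ∑ j, ∑' n, f (e (j, n)) := (hfe.tsum_prod' hfiber).trans (tsum_fintype _)
    _ = ∑ j, polyphaseTerm M γ a j ξ := by
      refine Finset.sum_congr rfl fun j _ => ?_
      rw [polyphaseTerm, hpU_eq, fhat_eq_tsum, ← tsum_mul_left]
      refine tsum_congr fun n => ?_
      simp only [f, e, Equiv.ofBijective_apply, coset, zr_add, add_dotProduct, expNegI_add,
        zr_mulVec_dotProduct]
      ring

lemma Interp.polyphaseTerm_of_eq_zero {a : (Fin d → ℤ) → ℂ} (ha : Interp M a) {j : Fin N}
    (hj : γ j = 0) (ξ : Fin d → ℝ) : polyphaseTerm M γ a j ξ = (dm M : ℂ)⁻¹ := by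
  rw [polyphaseTerm, hpU_eq, hj, zr_zero, zero_dotProduct, expNegI_zero, one_mul, fhat_eq_tsum,
    tsum_eq_single 0]
  · simpa [coset, expNegI_zero] using ha 0
  · intro k hk
    simp [coset, ha k, hk]

lemma conj_hpB_mul_hpB (hdet : M.det ≠ 0) (a ta : (Fin d → ℤ) → ℂ) (j : Fin N)
    (ξ ξ' : Fin d → ℝ) :
    conj (hpB M γ a j ξ) * hpB M γ ta j ξ'
      = (dm M : ℂ)⁻¹ - conj (polyphaseTerm M γ a j ξ) - polyphaseTerm M γ ta j ξ'
        + dm M * (conj (polyphaseTerm M γ a j ξ) * polyphaseTerm M γ ta j ξ') := by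
  set r : ℂ := (Real.sqrt (dm M) : ℂ)
  have hr : r * r = dm M := by
    rw [← Complex.ofReal_mul, Real.mul_self_sqrt (Nat.cast_nonneg _), Complex.ofReal_natCast]
  have hr0 : r ≠ 0 := fun h => by simp [h, eq_comm, dm, hdet] at hr
  have hri : r⁻¹ * r = 1 := inv_mul_cancel₀ hr0
  have hrri : r⁻¹ * r⁻¹ = (dm M : ℂ)⁻¹ := by rw [← mul_inv, hr]
  have hrc : conj r = r := Complex.conj_ofReal _
  change conj (r⁻¹ - r * polyphaseTerm M γ a j ξ) * (r⁻¹ - r * polyphaseTerm M γ ta j ξ') = _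
  rw [map_sub, map_mul, map_inv₀, hrc]
  linear_combination hrri - (conj (polyphaseTerm M γ a j ξ) + polyphaseTerm M γ ta j ξ') * hri
    + conj (polyphaseTerm M γ a j ξ) * polyphaseTerm M γ ta j ξ' * hr

end Polyphase

lemma conj_hpB_mul_hpB_add_sum_conj_hpU_mul_hpU {M : Matrix (Fin d) (Fin d) ℤ}
    {γ : Fin N → Fin d → ℤ} (hdet : M.det ≠ 0) {ω : Fin d → ℝ} {m : Fin d → ℤ}
    (hω : (Mr M)ᵀ *ᵥ ω = zr m) {a ta : (Fin d → ℤ) → ℂ} {s : ℕ}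
    {u tu : Fin s → (Fin d → ℤ) → ℂ} {j : Fin N}
    (hfac : ∀ η : Fin d → ℝ, (dm M : ℂ)⁻¹ - dm M *
        (conj (fhat (coset M (γ j) a) η) * fhat (coset M (γ j) ta) η)
      = ∑ t, conj (fhat (u t) η) * fhat (tu t) η) (ξ : Fin d → ℝ) :
    conj (hpB M γ a j ξ) * hpB M γ ta j (ξ + (2 * π) • ω)
        + ∑ t, conj (hpU M γ (u t) j ξ) * hpU M γ (tu t) j (ξ + (2 * π) • ω)
      = (dm M : ℂ)⁻¹ * (1 + freqChar ω (γ j)) - conj (polyphaseTerm M γ a j ξ)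
        - polyphaseTerm M γ ta j (ξ + (2 * π) • ω) := by
  have hshift (v w : (Fin d → ℤ) → ℂ) :
      conj (hpU M γ v j ξ) * hpU M γ w j (ξ + (2 * π) • ω)
        = freqChar ω (γ j) * (conj (fhat v ((Mr M)ᵀ *ᵥ ξ)) * fhat w ((Mr M)ᵀ *ᵥ ξ)) := by
    rw [hpU_add_two_pi_smul hω, mul_left_comm, conj_hpU_mul_hpU]
  rw [conj_hpB_mul_hpB hdet, polyphaseTerm, polyphaseTerm, hshift, Finset.sum_congr rfl
    fun t _ => hshift (u t) (tu t), ← Finset.mul_sum, ← hfac]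
  ring

lemma eq_zero_or_forall_ne_zr {M : Matrix (Fin d) (Fin d) ℤ} {ω : Fin N → Fin d → ℝ}
    (hω : ∀ x : Fin d → ℝ, (∃ k, (Mr M)ᵀ *ᵥ x = zr k) → ∃! j, ∃ n, x - ω j = zr n)
    {j₀ : Fin N} (hω₀ : ω j₀ = 0) (l : Fin N) : ω l = 0 ∨ ∀ n, ω l ≠ zr n := by
  refine or_iff_not_imp_right.mpr fun h => ?_
  obtain ⟨n, hn⟩ := not_forall_not.mp h
  obtain ⟨j, -, huniq⟩ := hω 0 ⟨0, by simp⟩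
  rw [huniq l ⟨-n, by simp [hn]⟩, ← huniq j₀ ⟨0, by simp [hω₀]⟩, hω₀]

theorem stmt13_general {d : ℕ} (M : Matrix (Fin d) (Fin d) ℤ) (hM : IsDilation M)
    (N : ℕ) (hN : N = dm M) (hpos : 0 < N)
    (γ : Fin N → (Fin d → ℤ)) (ω : Fin N → (Fin d → ℝ))
    (hγ1 : γ ⟨0, hpos⟩ = 0) (hω1 : ω ⟨0, hpos⟩ = 0)
    (hγ : ∀ k : Fin d → ℤ, ∃! j : Fin N, ∃ n : Fin d → ℤ, k = γ j + M.mulVec n)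
    (hωmem : ∀ j : Fin N, ∃ k : Fin d → ℤ, (Mr M)ᵀ.mulVec (ω j) = zr k)
    (hω : ∀ x : Fin d → ℝ, (∃ k : Fin d → ℤ, (Mr M)ᵀ.mulVec x = zr k) →
      ∃! j : Fin N, ∃ n : Fin d → ℤ, x - ω j = zr n)
    (a ta : (Fin d → ℤ) → ℂ)
    (ha : (Function.support a).Finite) (hta : (Function.support ta).Finite)
    (hinta : Interp M a) (hintta : Interp M ta)
    (s : Fin N → ℕ) (u tu : (j : Fin N) → Fin (s j) → ((Fin d → ℤ) → ℂ))
    (hfac : ∀ j : Fin N, j ≠ ⟨0, hpos⟩ → ∀ ξ : Fin d → ℝ,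
      ((dm M : ℂ))⁻¹ - (dm M : ℂ) *
          ((starRingEnd ℂ) (fhat (coset M (γ j) a) ξ) * fhat (coset M (γ j) ta) ξ)
        = ∑ t : Fin (s j), (starRingEnd ℂ) (fhat (u j t) ξ) * fhat (tu j t) ξ) :
    ∀ (ξ : Fin d → ℝ) (l : Fin N),
      (starRingEnd ℂ) (fhat a ξ) * fhat ta (ξ + (2 * Real.pi) • ω l)
        + (starRingEnd ℂ) (fhat a ξ - 1) * (1 - fhat ta (ξ + (2 * Real.pi) • ω l))
        + ∑ j ∈ Finset.univ.erase ⟨0, hpos⟩,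
            (starRingEnd ℂ) (hpB M γ a j ξ) * hpB M γ ta j (ξ + (2 * Real.pi) • ω l)
        + ∑ j ∈ Finset.univ.erase ⟨0, hpos⟩, ∑ t : Fin (s j),
            (starRingEnd ℂ) (hpU M γ (u j t) j ξ) *
              hpU M γ (tu j t) j (ξ + (2 * Real.pi) • ω l)
        = if ω l = 0 then 1 else 0 := by
  intro ξ l
  obtain ⟨m, hm⟩ := hωmem l
  have hreps : IsCosetReps M γ := hγ
  have hdm : (dm M : ℂ) ≠ 0 := by simpa [dm] using hM.1
  set ξ' := ξ + (2 * π) • ω l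
  set g : Fin N → ℂ := fun j => (dm M : ℂ)⁻¹ * (1 + freqChar (ω l) (γ j))
    - conj (polyphaseTerm M γ a j ξ) - polyphaseTerm M γ ta j ξ'
  have hg0 : g ⟨0, hpos⟩ = 0 := by
    simp only [g, hinta.polyphaseTerm_of_eq_zero hγ1, hintta.polyphaseTerm_of_eq_zero hγ1, hγ1,
      AddChar.map_zero_eq_one, map_inv₀, map_natCast]
    ring
  have hsum_g : ∑ j, g j = 1 + (dm M : ℂ)⁻¹ * ∑ j, freqChar (ω l) (γ j)
      - conj (fhat a ξ) - fhat ta ξ' := by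
    rw [hreps.fhat_eq_sum_polyphaseTerm hM.1 ha, hreps.fhat_eq_sum_polyphaseTerm hM.1 hta,
      map_sum]
    simp only [g, Finset.sum_sub_distrib, mul_add, Finset.sum_add_distrib, Finset.mul_sum]
    simp [hN, hdm]
  have hchar := hreps.inv_dm_mul_sum_freqChar hN hM.1 hm (eq_zero_or_forall_ne_zr hω hω1 l)
  rw [add_assoc, ← Finset.sum_add_distrib, Finset.sum_congr rfl fun j hj =>
    conj_hpB_mul_hpB_add_sum_conj_hpU_mul_hpU hM.1 hm (hfac j (Finset.ne_of_mem_erase hj)) ξ]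
  change _ + ∑ j ∈ _, g j = _
  rw [Finset.sum_erase_eq_sub (Finset.mem_univ _), hg0, sub_zero, hsum_g, ← hchar, map_sub,
    map_one]
  ring

/-- the constructed high-pass filters form a dual `M`-framelet filter
bank with the interpolatory low-pass pair `(a, ã)`. -/
theorem stmt13 {d : ℕ} (M : Matrix (Fin d) (Fin d) ℤ) (hM : IsDilation M)
    (N : ℕ) (hN : N = dm M) (hpos : 0 < N)
    (γ : Fin N → (Fin d → ℤ)) (ω : Fin N → (Fin d → ℝ))
    (hγ1 : γ ⟨0, hpos⟩ = 0) (hω1 : ω ⟨0, hpos⟩ = 0)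
    (hγ : ∀ k : Fin d → ℤ, ∃! j : Fin N, ∃ n : Fin d → ℤ, k = γ j + M.mulVec n)
    (hωmem : ∀ j : Fin N, ∃ k : Fin d → ℤ, (Mr M)ᵀ.mulVec (ω j) = zr k)
    (hω : ∀ x : Fin d → ℝ, (∃ k : Fin d → ℤ, (Mr M)ᵀ.mulVec x = zr k) →
      ∃! j : Fin N, ∃ n : Fin d → ℤ, x - ω j = zr n)
    (a ta : (Fin d → ℤ) → ℂ)
    (ha : (Function.support a).Finite) (hta : (Function.support ta).Finite)
    (hinta : Interp M a) (hintta : Interp M ta)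
    (s : Fin N → ℕ) (u tu : (j : Fin N) → Fin (s j) → ((Fin d → ℤ) → ℂ))
    (hufin : ∀ j t, (Function.support (u j t)).Finite)
    (htufin : ∀ j t, (Function.support (tu j t)).Finite)
    (hfac : ∀ j : Fin N, j ≠ ⟨0, hpos⟩ → ∀ ξ : Fin d → ℝ,
      ((dm M : ℂ))⁻¹ - (dm M : ℂ) *
          ((starRingEnd ℂ) (fhat (coset M (γ j) a) ξ) * fhat (coset M (γ j) ta) ξ)
        = ∑ t : Fin (s j), (starRingEnd ℂ) (fhat (u j t) ξ) * fhat (tu j t) ξ) :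
    ∀ (ξ : Fin d → ℝ) (l : Fin N),
      (starRingEnd ℂ) (fhat a ξ) * fhat ta (ξ + (2 * Real.pi) • ω l)
        + (starRingEnd ℂ) (fhat a ξ - 1) * (1 - fhat ta (ξ + (2 * Real.pi) • ω l))
        + ∑ j ∈ Finset.univ.erase ⟨0, hpos⟩,
            (starRingEnd ℂ) (hpB M γ a j ξ) * hpB M γ ta j (ξ + (2 * Real.pi) • ω l)
        + ∑ j ∈ Finset.univ.erase ⟨0, hpos⟩, ∑ t : Fin (s j),
            (starRingEnd ℂ) (hpU M γ (u j t) j ξ) *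
              hpU M γ (tu j t) j (ξ + (2 * Real.pi) • ω l)
        = if ω l = 0 then 1 else 0 :=
  stmt13_general M hM N hN hpos γ ω hγ1 hω1 hγ hωmem hω a ta ha hta hinta hintta s u tu hfac
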